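/- arXiv:1810.04125 — 3 statements merged into one kernel-verified Lean document; each statement's English description precedes it below -/
import Mathlib

section
/- Let σ₁ ≥ ... ≥ σ_r > 0, set ‖A‖_F² = σ₁²+...+σ_r², and let X̄_d = (1/d)Σ_{i=1}^d X_i where X_i are i.i.d. copies of X = Σ_k σ_k² ξ_k² with ξ_k i.i.d. N(0,1). Then for every τ > 1, P[X̄_d ≥ ‖A‖_F² τ] ≤ exp(−dτ/2) · ‖A‖_F^{dr} · ∏_{k=1}^r (‖A‖_F² − σ_k²)^{-d/2}. -/
/-!
Chernoff's bound at `t = d / (2‖A‖_F²)`. The average `X̄_d` is the sum of the `d r` independent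
variables `d⁻¹ σ_k² ξ_{ik}²`, and a scaled squared standard Gaussian `c ξ²` has moment generating
function `(1 - 2 t c)^(-1/2)` for `2 t c < 1`. At this `t` the factor for `(i, k)` is
`(1 - σ_k² / ‖A‖_F²)^(-1/2)`, finite because `r ≥ 2` forces `σ_k² < ‖A‖_F²`.
-/

open MeasureTheory ProbabilityTheory Real
open scoped NNReal

lemma gaussianPDFReal_zero_mul_exp_mul_sq {v : ℝ≥0} (hv : v ≠ 0) (b x : ℝ) :
    gaussianPDFReal 0 v x * exp (b * x ^ 2)
      = (√(2 * π * v))⁻¹ * exp (-((1 - 2 * b * v) / (2 * v)) * x ^ 2) := by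
  have hv' : (v : ℝ) ≠ 0 := by exact_mod_cast hv
  rw [gaussianPDFReal, mul_assoc, ← exp_add]
  congr 2
  field_simp
  ring

lemma integrable_exp_mul_sq_gaussianReal {v : ℝ≥0} {b : ℝ} (hb : b * v < 1 / 2) :
    Integrable (fun x ↦ exp (b * x ^ 2)) (gaussianReal 0 v) := by
  rcases eq_or_ne v 0 with rfl | hv
  · rw [gaussianReal_zero_var]
    exact integrable_dirac enorm_lt_top
  rw [gaussianReal_of_var_ne_zero _ hv, integrable_withDensity_iff_integrable_smul'
    (measurable_gaussianPDF 0 v) (ae_of_all _ fun _ ↦ gaussianPDF_lt_top)]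
  simp_rw [toReal_gaussianPDF, smul_eq_mul, gaussianPDFReal_zero_mul_exp_mul_sq hv]
  have hv' : (0 : ℝ) < v := by positivity
  have ha : 0 < 1 - 2 * b * v := by linarith
  exact (integrable_exp_neg_mul_sq (by positivity)).const_mul _

lemma integral_exp_mul_sq_gaussianReal {v : ℝ≥0} {b : ℝ} (hb : b * v < 1 / 2) :
    ∫ x, exp (b * x ^ 2) ∂gaussianReal 0 v = (1 - 2 * b * v) ^ (-(1 : ℝ) / 2) := by
  rcases eq_or_ne v 0 with rfl | hv
  · simp [gaussianReal_zero_var]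
  have hv' : (0 : ℝ) < v := by positivity
  have ha : 0 < 1 - 2 * b * v := by linarith
  rw [integral_gaussianReal_eq_integral_smul hv]
  simp_rw [smul_eq_mul, gaussianPDFReal_zero_mul_exp_mul_sq hv]
  rw [integral_const_mul, integral_gaussian, div_div_eq_mul_div, sqrt_div' _ ha.le,
    rpow_div_two_eq_sqrt _ ha.le, rpow_neg_one, mul_comm π]
  field_simp

section SquaredGaussian

variable {Ω : Type*} [MeasurableSpace Ω] {μ : Measure Ω} {X : Ω → ℝ} {v : ℝ≥0} {c t : ℝ}

lemma integrable_exp_mul_const_mul_sq_of_map_eq_gaussianReal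
    (hX : μ.map X = gaussianReal 0 v) (h : t * c * v < 1 / 2) :
    Integrable (fun ω ↦ exp (t * (c * X ω ^ 2))) μ := by
  have hXm : AEMeasurable X μ := aemeasurable_of_map_neZero (by rw [hX]; infer_instance)
  have hint := integrable_exp_mul_sq_gaussianReal h
  rw [← hX, integrable_map_measure (by fun_prop) hXm] at hint
  simpa only [Function.comp_def, mul_assoc] using hint

lemma mgf_const_mul_sq_of_map_eq_gaussianReal
    (hX : μ.map X = gaussianReal 0 v) (h : t * c * v < 1 / 2) :
    mgf (fun ω ↦ c * X ω ^ 2) μ t = (1 - 2 * (t * c) * v) ^ (-(1 : ℝ) / 2) := by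
  have hXm : AEMeasurable X μ := aemeasurable_of_map_neZero (by rw [hX]; infer_instance)
  rw [← integral_exp_mul_sq_gaussianReal h, ← hX, integral_map hXm (by fun_prop), mgf]
  simp only [mul_assoc]

end SquaredGaussian

theorem ProbabilityTheory.iIndepFun.measureReal_le_exp_mul_prod_mgf {Ω ι : Type*}
    [MeasurableSpace Ω] {μ : Measure Ω} {X : ι → Ω → ℝ} (h_indep : iIndepFun X μ)
    (h_meas : ∀ i, AEMeasurable (X i) μ) (s : Finset ι) (ε : ℝ) {t : ℝ} (ht : 0 ≤ t)
    (h_int : ∀ i ∈ s, Integrable (fun ω ↦ exp (t * X i ω)) μ) :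
    μ.real {ω | ε ≤ ∑ i ∈ s, X i ω} ≤ exp (-t * ε) * ∏ i ∈ s, mgf (X i) μ t := by
  have : IsProbabilityMeasure μ := h_indep.isProbabilityMeasure
  have hmgf := h_indep.mgf_sum₀ h_meas s (t := t)
  have hint : Integrable (fun ω ↦ exp (t * (∑ i ∈ s, X i) ω)) μ := by
    rw [← mgf_pos_iff, hmgf]
    exact Finset.prod_pos fun i hi ↦ mgf_pos (h_int i hi)
  simpa only [← hmgf, Finset.sum_apply] using measure_ge_le_exp_mul_mgf ε ht hint

lemma sq_lt_sum_sq {ι : Type*} [Fintype ι] [Nontrivial ι] {f : ι → ℝ} (hf : ∀ i, f i ≠ 0)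
    (k : ι) : f k ^ 2 < ∑ i, f i ^ 2 := by
  obtain ⟨j, hj⟩ := exists_ne k
  exact Finset.single_lt_sum (f := fun i ↦ f i ^ 2) hj (Finset.mem_univ k) (Finset.mem_univ j)
    (sq_pos_of_ne_zero (hf j)) fun i _ _ ↦ sq_nonneg (f i)

lemma one_sub_div_rpow_neg_half {a b : ℝ} (ha : 0 < a) (hb : b < a) :
    (1 - b / a) ^ (-(1 : ℝ) / 2) = √a * (a - b) ^ (-(1 : ℝ) / 2) := by
  rw [one_sub_div ha.ne', div_rpow (sub_pos.2 hb).le ha.le, div_eq_mul_inv, ← rpow_neg ha.le,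
    mul_comm, neg_div, neg_neg, ← sqrt_eq_rpow]

lemma Fintype.prod_prod_type_const_mul_rpow {ι κ : Type*} [Fintype ι] [Fintype κ] (a y : ℝ)
    {g : κ → ℝ} (hg : ∀ k, 0 ≤ g k) :
    ∏ p : ι × κ, a * g p.2 ^ y
      = a ^ (Fintype.card ι * Fintype.card κ) * ∏ k, g k ^ (Fintype.card ι * y) := by
  rw [Fintype.prod_prod_type, Finset.prod_comm]
  simp only [Finset.prod_const, Finset.card_univ, mul_pow, Finset.prod_mul_distrib, ← pow_mul]
  congr 1
  refine Finset.prod_congr rfl fun k _ ↦ ?_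
  rw [← rpow_natCast, ← rpow_mul (hg k), mul_comm]

theorem stmt_6_general {Ω : Type*} [MeasurableSpace Ω]
    (μ : Measure Ω)
    {r d : ℕ} (hr : 2 ≤ r) (hd : 0 < d)
    (σ : Fin r → ℝ) (hσpos : ∀ k, 0 < σ k)
    (ξ : Ω → Fin d × Fin r → ℝ)
    (hgauss : ∀ p, Measure.map (fun ω => ξ ω p) μ = gaussianReal 0 1)
    (hindep : iIndepFun (fun p ω => ξ ω p) μ)
    (F2 : ℝ) (hF2 : F2 = ∑ k, σ k ^ 2)
    (τ : ℝ) :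
    (μ {ω | F2 * τ ≤ (d : ℝ)⁻¹ * ∑ i : Fin d, ∑ k, σ k ^ 2 * ξ ω (i, k) ^ 2}).toReal
      ≤ Real.exp (-(d * τ) / 2) * Real.sqrt F2 ^ (d * r) *
        ∏ k, (F2 - σ k ^ 2) ^ (-(d : ℝ) / 2) := by
  have : Nontrivial (Fin r) := Fin.nontrivial_iff_two_le.mpr hr
  have hσ_lt : ∀ k, σ k ^ 2 < F2 := hF2 ▸ sq_lt_sum_sq fun k ↦ (hσpos k).ne'
  have hF2_pos : 0 < F2 := (sq_nonneg _).trans_lt (hσ_lt ⟨0, by omega⟩)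
  set t : ℝ := d / (2 * F2) with ht_def
  set Y : Fin d × Fin r → Ω → ℝ := fun p ω ↦ (d : ℝ)⁻¹ * σ p.2 ^ 2 * ξ ω p ^ 2
  have hY_indep : iIndepFun Y μ :=
    hindep.comp (fun p x ↦ (d : ℝ)⁻¹ * σ p.2 ^ 2 * x ^ 2) fun p ↦ by fun_prop
  have hY_meas : ∀ p, AEMeasurable (Y p) μ := fun p ↦
    (aemeasurable_of_map_neZero (by rw [hgauss p]; infer_instance)).pow_const 2 |>.const_mul _
  have htc : ∀ k, 2 * (t * ((d : ℝ)⁻¹ * σ k ^ 2)) * ((1 : ℝ≥0) : ℝ) = σ k ^ 2 / F2 := fun k ↦ by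
    rw [ht_def, NNReal.coe_one]
    field_simp
  have hlt : ∀ k, t * ((d : ℝ)⁻¹ * σ k ^ 2) * ((1 : ℝ≥0) : ℝ) < 1 / 2 := fun k ↦ by
    linarith [htc k, (div_lt_one hF2_pos).2 (hσ_lt k)]
  have hY_mgf : ∀ p, mgf (Y p) μ t = √F2 * (F2 - σ p.2 ^ 2) ^ (-(1 : ℝ) / 2) := fun p ↦ by
    rw [mgf_const_mul_sq_of_map_eq_gaussianReal (hgauss p) (hlt p.2), htc,
      one_sub_div_rpow_neg_half hF2_pos (hσ_lt p.2)]
  calc (μ {ω | F2 * τ ≤ (d : ℝ)⁻¹ * ∑ i : Fin d, ∑ k, σ k ^ 2 * ξ ω (i, k) ^ 2}).toReal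
      = μ.real {ω | F2 * τ ≤ ∑ p, Y p ω} := by
        simp only [Y, Fintype.sum_prod_type, Finset.mul_sum, mul_assoc]; rfl
    _ ≤ exp (-t * (F2 * τ)) * ∏ p, mgf (Y p) μ t :=
        hY_indep.measureReal_le_exp_mul_prod_mgf hY_meas _ _ (by positivity) fun p _ ↦
          integrable_exp_mul_const_mul_sq_of_map_eq_gaussianReal (hgauss p) (hlt p.2)
    _ = _ := by
        rw [Fintype.prod_congr _ _ hY_mgf, Fintype.prod_prod_type_const_mul_rpow _ _
          fun k ↦ (sub_pos.2 (hσ_lt k)).le, Fintype.card_fin, Fintype.card_fin,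
          show -t * (F2 * τ) = -(d * τ) / 2 by rw [ht_def]; field_simp,
          mul_assoc, mul_div_assoc', mul_neg_one]

/-- upper-tail probabilistic bound: with `‖A‖_F² = σ₁²+⋯+σ_r²` and `X̄_d`
the average of `d` i.i.d. copies of `X = Σ_k σ_k² ξ_k²`, for every `τ > 1`,
`P[X̄_d ≥ ‖A‖_F² τ] ≤ exp(−dτ/2) ‖A‖_F^{dr} ∏_k (‖A‖_F² − σ_k²)^{-d/2}`. -/
theorem stmt_6 {Ω : Type*} [MeasurableSpace Ω]
    (μ : Measure Ω) [IsProbabilityMeasure μ]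
    {r d : ℕ} (hr : 2 ≤ r) (hd : 0 < d)
    (σ : Fin r → ℝ) (hσpos : ∀ k, 0 < σ k) (hσmono : Antitone σ)
    (ξ : Ω → Fin d × Fin r → ℝ)
    (hmeas : ∀ p, Measurable fun ω => ξ ω p)
    (hgauss : ∀ p, Measure.map (fun ω => ξ ω p) μ = gaussianReal 0 1)
    (hindep : iIndepFun (fun p ω => ξ ω p) μ)
    (F2 : ℝ) (hF2 : F2 = ∑ k, σ k ^ 2)
    (τ : ℝ) (hτ : 1 < τ) :
    (μ {ω | F2 * τ ≤ (d : ℝ)⁻¹ * ∑ i : Fin d, ∑ k, σ k ^ 2 * ξ ω (i, k) ^ 2}).toReal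
      ≤ Real.exp (-(d * τ) / 2) * Real.sqrt F2 ^ (d * r) *
        ∏ k, (F2 - σ k ^ 2) ^ (-(d : ℝ) / 2) :=
  stmt_6_general μ hr hd σ hσpos ξ hgauss hindep F2 hF2 τ
end

section
/- Let σ₁ ≥ ... ≥ σ_r > 0 with r ≥ 2, F² = σ₁²+...+σ_r², and define ν_k = ln(1/(1 − σ_k²/F²)). Then Σ_{k=1}^r ν_k ≤ 1/(1−α) where α = σ₁²/F² is the ratio of the largest squared singular value to the squared Frobenius norm. -/
/-!
Write `x_k = σ_k² / F²`, so that `x_k ≤ α < 1` and `Σ x_k = 1`. Since `x ↦ -log (1 - x)` is convex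
and vanishes at `0`, it lies below its chord on `[0, α]`; summing the chord bounds and using
`Σ x_k = 1` gives `Σ ν_k ≤ -log (1 - α) / α`, and `-log (1 - α) ≤ α / (1 - α)`.
-/

open Finset Real

lemma neg_log_one_sub_le_div_mul {a x : ℝ} (ha₀ : 0 < a) (ha₁ : a < 1) (hx₀ : 0 ≤ x)
    (hxa : x ≤ a) : -log (1 - x) ≤ x / a * -log (1 - a) := by
  have ht₀ : 0 ≤ x / a := div_nonneg hx₀ ha₀.le
  have ht₁ : 0 ≤ 1 - x / a := sub_nonneg.mpr ((div_le_one ha₀).mpr hxa)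
  have hconc := strictConcaveOn_log_Ioi.concaveOn.2 (Set.mem_Ioi.mpr (sub_pos.mpr ha₁))
    (Set.mem_Ioi.mpr one_pos) ht₀ ht₁ (add_sub_cancel _ _)
  have hpoint : x / a * (1 - a) + (1 - x / a) * 1 = 1 - x := by
    field_simp
    ring
  simp only [smul_eq_mul, hpoint, log_one, mul_zero, add_zero] at hconc
  linarith

lemma neg_log_one_sub_le_div_one_sub {a : ℝ} (ha : a < 1) : -log (1 - a) ≤ a / (1 - a) := by
  have h := one_sub_inv_le_log_of_pos (sub_pos.mpr ha)
  have hsub : a / (1 - a) = (1 - a)⁻¹ - 1 := by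
    field_simp [(sub_pos.mpr ha).ne']
    ring
  linarith

lemma sum_neg_log_one_sub_le {ι : Type*} (s : Finset ι) (x : ι → ℝ) {a : ℝ} (ha₀ : 0 < a)
    (ha₁ : a < 1) (hx₀ : ∀ i ∈ s, 0 ≤ x i) (hxa : ∀ i ∈ s, x i ≤ a) (hsum : ∑ i ∈ s, x i = 1) :
    ∑ i ∈ s, -log (1 - x i) ≤ 1 / (1 - a) := by
  have h1a : 0 < 1 - a := sub_pos.mpr ha₁
  calc ∑ i ∈ s, -log (1 - x i)
      ≤ ∑ i ∈ s, x i / a * -log (1 - a) :=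
        sum_le_sum fun i hi => neg_log_one_sub_le_div_mul ha₀ ha₁ (hx₀ i hi) (hxa i hi)
    _ = 1 / a * -log (1 - a) := by rw [← sum_mul, ← sum_div, hsum]
    _ ≤ 1 / a * (a / (1 - a)) := by gcongr; exact neg_log_one_sub_le_div_one_sub ha₁
    _ = 1 / (1 - a) := by field_simp

/-- for `σ₁ ≥ ⋯ ≥ σ_r > 0` with `r ≥ 2`, `F² = σ₁²+⋯+σ_r²` and
`ν_k = ln(1/(1 − σ_k²/F²))`, one has `Σ_k ν_k ≤ 1/(1−α)` where `α = σ₁²/F²`. -/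
theorem stmt_10 {r : ℕ} (hr : 2 ≤ r)
    (σ : Fin r → ℝ) (hσpos : ∀ k, 0 < σ k) (hσmono : Antitone σ)
    (F2 : ℝ) (hF2 : F2 = ∑ k, σ k ^ 2)
    (α : ℝ) (hα : α = σ ⟨0, by omega⟩ ^ 2 / F2) :
    ∑ k, Real.log (1 / (1 - σ k ^ 2 / F2)) ≤ 1 / (1 - α) := by
  have hσ₀_lt : σ ⟨0, by omega⟩ ^ 2 < F2 := by
    rw [hF2]
    refine single_lt_sum (j := ⟨1, by omega⟩) (by simp [Fin.ext_iff]) (mem_univ _) (mem_univ _)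
      (pow_pos (hσpos _) 2) fun k _ _ => (pow_pos (hσpos k) 2).le
  have hF2_pos : 0 < F2 := (pow_pos (hσpos _) 2).trans hσ₀_lt
  have hle_α : ∀ k, σ k ^ 2 / F2 ≤ α := fun k => by
    rw [hα]
    gcongr
    exacts [(hσpos k).le, hσmono (Fin.mk_le_of_le_val (Nat.zero_le _))]
  have hsum : ∑ k, σ k ^ 2 / F2 = 1 := by rw [← sum_div, ← hF2, div_self hF2_pos.ne']
  have hν : ∀ k, log (1 / (1 - σ k ^ 2 / F2)) = -log (1 - σ k ^ 2 / F2) := fun k => by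
    rw [one_div, log_inv]
  rw [sum_congr rfl fun k _ => hν k]
  exact sum_neg_log_one_sub_le _ _ (hα ▸ div_pos (pow_pos (hσpos _) 2) hF2_pos)
    (hα ▸ (div_lt_one hF2_pos).mpr hσ₀_lt) (fun k _ => by positivity) (fun k _ => hle_α k) hsum
end

section
/- Let σ₁ ≥ ... ≥ σ_r > 0, F² = Σσ_k², X̄_d the average of d i.i.d. copies of X = Σσ_k²ξ_k² (ξ_k i.i.d. N(0,1)). If 0 ≤ τ < ln 2, then P[X̄_d ≤ F²τ] ≤ exp(−(d/2)(C − τ)) where C = Σ_k ln(1 + σ_k²/F²) ≥ ln 2 > τ; in particular the lower tail probability decays exponentially in d. -/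
/-!
A summand `σ_k² ξ²` with `ξ ~ N(0,1)` has moment generating function `(1 - 2tσ_k²)^(-1/2)`.
The lower-tail Chernoff bound for the `d r` independent summands of `d X̄_d`, taken at
`t = -1/(2F²)`, gives `exp(dτ/2) ∏_k (1 + σ_k²/F²)^(-d/2) = exp(-(d/2)(C - τ))`.
Since the weights `σ_k²/F²` sum to one and `x ln 2 ≤ ln(1 + x)` on `[0, 1]` (convexity of `exp`),
`C ≥ ln 2`.
-/

open MeasureTheory ProbabilityTheory Real

namespace ProbabilityTheory

theorem integral_exp_mul_sq_gaussianReal {a : ℝ} (ha : a < 1 / 2) :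
    ∫ x, exp (a * x ^ 2) ∂gaussianReal 0 1 = (√(1 - 2 * a))⁻¹ := by
  have hb : 0 < 1 / 2 - a := by linarith
  have hdensity : ∀ x : ℝ, gaussianPDFReal 0 1 x • exp (a * x ^ 2)
      = (√(2 * π))⁻¹ * exp (-(1 / 2 - a) * x ^ 2) := by
    intro x
    rw [gaussianPDFReal, smul_eq_mul, mul_assoc, ← exp_add]
    push_cast
    ring_nf
  rw [integral_gaussianReal_eq_integral_smul one_ne_zero]
  simp_rw [hdensity]
  rw [integral_const_mul, integral_gaussian, ← sqrt_inv, ← sqrt_mul (by positivity),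
    ← sqrt_inv]
  congr 1
  field_simp [pi_ne_zero]

theorem mgf_const_mul_sq_of_map_eq_gaussianReal {Ω : Type*} [MeasurableSpace Ω]
    {μ : Measure Ω} {ξ : Ω → ℝ} (hξ : AEMeasurable ξ μ) (hgauss : μ.map ξ = gaussianReal 0 1)
    {c t : ℝ} (hct : t * c < 1 / 2) :
    mgf (fun ω => c * ξ ω ^ 2) μ t = (√(1 - 2 * (t * c)))⁻¹ := by
  have hmap : mgf (fun x => c * x ^ 2) (μ.map ξ) t = mgf (fun ω => c * ξ ω ^ 2) μ t :=
    mgf_map hξ (by fun_prop)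
  rw [← hmap, hgauss, mgf, ← integral_exp_mul_sq_gaussianReal hct]
  simp_rw [mul_assoc]

theorem iIndepFun.measure_sum_le_le_exp_mul_prod_mgf {Ω ι : Type*} [MeasurableSpace Ω]
    {μ : Measure Ω} {X : ι → Ω → ℝ} (h_indep : iIndepFun X μ)
    (h_meas : ∀ i, Measurable (X i)) (s : Finset ι) {t : ℝ} (ht : t ≤ 0)
    (h_int : ∀ i ∈ s, Integrable (fun ω => exp (t * X i ω)) μ) (ε : ℝ) :
    μ.real {ω | ∑ i ∈ s, X i ω ≤ ε} ≤ exp (-t * ε) * ∏ i ∈ s, mgf (X i) μ t := by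
  have : IsProbabilityMeasure μ := h_indep.isProbabilityMeasure
  rw [← h_indep.mgf_sum h_meas]
  simpa only [Finset.sum_apply] using
    measure_le_le_exp_mul_mgf ε ht (h_indep.integrable_exp_mul_sum h_meas h_int)

theorem measure_sum_mul_sq_le_le_exp {Ω ι : Type*} [MeasurableSpace Ω] {μ : Measure Ω}
    {ξ : ι → Ω → ℝ} (hmeas : ∀ i, Measurable (ξ i))
    (hgauss : ∀ i, μ.map (ξ i) = gaussianReal 0 1) (hindep : iIndepFun ξ μ)
    (s : Finset ι) {c : ι → ℝ} (hc : ∀ i ∈ s, 0 ≤ c i) {t : ℝ} (ht : t ≤ 0) (ε : ℝ) :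
    μ.real {ω | ∑ i ∈ s, c i * ξ i ω ^ 2 ≤ ε}
      ≤ exp (-t * ε - ∑ i ∈ s, log (1 - 2 * (t * c i)) / 2) := by
  have : IsProbabilityMeasure μ := hindep.isProbabilityMeasure
  have hmgf : ∀ i ∈ s,
      mgf (fun ω => c i * ξ i ω ^ 2) μ t = exp (-(log (1 - 2 * (t * c i)) / 2)) := by
    intro i hi
    have htc : t * c i ≤ 0 := mul_nonpos_of_nonpos_of_nonneg ht (hc i hi)
    have hpos : 0 < 1 - 2 * (t * c i) := by linarith
    rw [mgf_const_mul_sq_of_map_eq_gaussianReal (hmeas i).aemeasurable (hgauss i)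
      (htc.trans_lt one_half_pos), ← exp_log (sqrt_pos.2 hpos), log_sqrt hpos.le, ← exp_neg]
  have hint : ∀ i ∈ s, Integrable (fun ω => exp (t * (c i * ξ i ω ^ 2))) μ :=
    fun i hi => mgf_pos_iff.1 (hmgf i hi ▸ exp_pos _)
  calc μ.real {ω | ∑ i ∈ s, c i * ξ i ω ^ 2 ≤ ε}
      ≤ exp (-t * ε) * ∏ i ∈ s, mgf (fun ω => c i * ξ i ω ^ 2) μ t :=
        (hindep.comp (fun i x => c i * x ^ 2) fun i => by fun_prop)
          |>.measure_sum_le_le_exp_mul_prod_mgf (fun i => by fun_prop) s ht hint ε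
    _ = exp (-t * ε - ∑ i ∈ s, log (1 - 2 * (t * c i)) / 2) := by
      rw [Finset.prod_congr rfl hmgf, ← exp_sum, ← exp_add, Finset.sum_neg_distrib,
        sub_eq_add_neg]

end ProbabilityTheory

theorem mul_log_two_le_log_one_add {x : ℝ} (hx0 : 0 ≤ x) (hx1 : x ≤ 1) :
    x * log 2 ≤ log (1 + x) := by
  have hconvex := convexOn_exp.2 (Set.mem_univ 0) (Set.mem_univ (log 2))
    (sub_nonneg.2 hx1) hx0 (sub_add_cancel 1 x)
  simp only [smul_eq_mul, mul_zero, zero_add, exp_zero, mul_one, exp_log two_pos] at hconvex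
  rw [← exp_le_exp, exp_log (by linarith)]
  linarith

theorem log_two_le_sum_log_one_add {ι : Type*} {s : Finset ι} {w : ι → ℝ}
    (hw0 : ∀ i ∈ s, 0 ≤ w i) (hw1 : ∑ i ∈ s, w i = 1) :
    log 2 ≤ ∑ i ∈ s, log (1 + w i) :=
  calc log 2 = ∑ i ∈ s, w i * log 2 := by rw [← Finset.sum_mul, hw1, one_mul]
    _ ≤ ∑ i ∈ s, log (1 + w i) := Finset.sum_le_sum fun i hi =>
      mul_log_two_le_log_one_add (hw0 i hi) (hw1 ▸ Finset.single_le_sum hw0 hi)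

theorem stmt_13_general {Ω : Type*} [MeasurableSpace Ω]
    (μ : Measure Ω) [IsProbabilityMeasure μ]
    {r d : ℕ} (hr : 0 < r) (hd : 0 < d)
    (σ : Fin r → ℝ) (hσpos : ∀ k, 0 < σ k)
    (ξ : Ω → Fin d × Fin r → ℝ)
    (hmeas : ∀ p, Measurable fun ω => ξ ω p)
    (hgauss : ∀ p, Measure.map (fun ω => ξ ω p) μ = gaussianReal 0 1)
    (hindep : iIndepFun (fun p ω => ξ ω p) μ)
    (F2 : ℝ) (hF2 : F2 = ∑ k, σ k ^ 2)
    (C : ℝ) (hC : C = ∑ k, Real.log (1 + σ k ^ 2 / F2))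
    (τ : ℝ) (hτ1 : τ < Real.log 2) :
    Real.log 2 ≤ C ∧ τ < C ∧
    (μ {ω | (d : ℝ)⁻¹ * ∑ i : Fin d, ∑ k, σ k ^ 2 * ξ ω (i, k) ^ 2 ≤ F2 * τ}).toReal
      ≤ Real.exp (-((d : ℝ) / 2) * (C - τ)) := by
  have hF2pos : 0 < F2 :=
    hF2 ▸ Finset.sum_pos (fun k _ => pow_pos (hσpos k) 2) ⟨⟨0, hr⟩, Finset.mem_univ _⟩
  have hlog2 : log 2 ≤ C := hC ▸ log_two_le_sum_log_one_add (fun k _ => by positivity)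
    (by rw [← Finset.sum_div, ← hF2, div_self hF2pos.ne'])
  refine ⟨hlog2, hτ1.trans_le hlog2, ?_⟩
  -- chosen so that `1 - 2 t σ_k² = 1 + σ_k² / F²`
  set t : ℝ := -(2 * F2)⁻¹ with ht
  have ht0 : t ≤ 0 := by rw [ht, neg_nonpos]; positivity
  have hshift : ∀ k, 1 - 2 * (t * σ k ^ 2) = 1 + σ k ^ 2 / F2 := fun k => by
    rw [ht]; field_simp; ring
  have hevent : {ω | (d : ℝ)⁻¹ * ∑ i : Fin d, ∑ k, σ k ^ 2 * ξ ω (i, k) ^ 2 ≤ F2 * τ}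
      = {ω | ∑ p : Fin d × Fin r, σ p.2 ^ 2 * ξ ω p ^ 2 ≤ d * (F2 * τ)} := by
    ext ω
    rw [Set.mem_ofPred_eq, Set.mem_ofPred_eq, Fintype.sum_prod_type,
      inv_mul_le_iff₀ (Nat.cast_pos.2 hd)]
  rw [hevent]
  calc μ.real {ω | ∑ p : Fin d × Fin r, σ p.2 ^ 2 * ξ ω p ^ 2 ≤ d * (F2 * τ)}
      ≤ exp (-t * (d * (F2 * τ)) - ∑ p : Fin d × Fin r, log (1 - 2 * (t * σ p.2 ^ 2)) / 2) :=
        measure_sum_mul_sq_le_le_exp hmeas hgauss hindep .univ (fun _ _ => sq_nonneg _) ht0 _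
    _ = exp (-((d : ℝ) / 2) * (C - τ)) := by
      simp only [Fintype.sum_prod_type, hshift]
      rw [← Finset.sum_div, ← hC, Finset.sum_const, Finset.card_univ, Fintype.card_fin,
        nsmul_eq_mul, ht]
      congr 1
      field_simp
      ring

/-- exponential decay of the lower tail: with `F² = Σ_k σ_k²` and `X̄_d`
the average of `d` i.i.d. copies of `X = Σ_k σ_k² ξ_k²`, if `0 ≤ τ < ln 2` then, with
`C = Σ_k ln(1+σ_k²/F²)`, one has `ln 2 ≤ C` (so `τ < C`) and
`P[X̄_d ≤ F²τ] ≤ exp(−(d/2)(C − τ))`. -/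
theorem stmt_13 {Ω : Type*} [MeasurableSpace Ω]
    (μ : Measure Ω) [IsProbabilityMeasure μ]
    {r d : ℕ} (hr : 0 < r) (hd : 0 < d)
    (σ : Fin r → ℝ) (hσpos : ∀ k, 0 < σ k) (hσmono : Antitone σ)
    (ξ : Ω → Fin d × Fin r → ℝ)
    (hmeas : ∀ p, Measurable fun ω => ξ ω p)
    (hgauss : ∀ p, Measure.map (fun ω => ξ ω p) μ = gaussianReal 0 1)
    (hindep : iIndepFun (fun p ω => ξ ω p) μ)
    (F2 : ℝ) (hF2 : F2 = ∑ k, σ k ^ 2)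
    (C : ℝ) (hC : C = ∑ k, Real.log (1 + σ k ^ 2 / F2))
    (τ : ℝ) (hτ0 : 0 ≤ τ) (hτ1 : τ < Real.log 2) :
    Real.log 2 ≤ C ∧ τ < C ∧
    (μ {ω | (d : ℝ)⁻¹ * ∑ i : Fin d, ∑ k, σ k ^ 2 * ξ ω (i, k) ^ 2 ≤ F2 * τ}).toReal
      ≤ Real.exp (-((d : ℝ) / 2) * (C - τ)) :=
  stmt_13_general μ hr hd σ hσpos ξ hmeas hgauss hindep F2 hF2 C hC τ hτ1
end
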